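/- Fix reals S_A>0, θ≥0, λ with 0<λ<λ_th, an integer B≥1, and a prior variance V with 0 < V ≤ v_th(λ,0). Then f(ζ,S_M) ≥ V for all ζ≥0 and S_M≥0; since f(0,0)=V, the pair (0,0) is a global minimizer of f over [0,∞)×[0,∞). -/

import Mathlib

/-!
Put `Λ = S_A S_M / (S_A + S_M)` and `ρ = ζ e^{-ζ}`. The map `r ↦ ν̂(V, r Λ)` is convex, so at
integers it lies above its chord through `r = 0, 1`: `ν̂(V, r Λ) ≥ V - r (V - ν̂(V, Λ))`.
Averaging against the binomial weights (Bernstein polynomials at `ρ`) gives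
`f ≥ V - B ρ (V - ν̂(V, Λ)) + λ ζ B (1 + θ S_M)`, and as `ρ ≤ ζ` it remains to bound the one-shot
gain `V - ν̂(V, Λ)` by `λ (1 + θ S_M)`. The gain increases with `V`, and `v_th(λ,0)` is the root
`W` of `(W - √(λθ))² = λ (W + 1/S_A)` that makes the cleared-denominator difference the perfect
square `S_A (√(λθ) (W - √(λθ)) S_M - λ)² / λ`.
-/

/-- Posterior variance update: `ν̂(V,Λ) = V/(1+V·Λ)`. -/
noncomputable def nuhat (V Lam : ℝ) : ℝ := V / (1 + V * Lam)

/-- Decentralized myopic cost `f(ζ,S_M)` with success probability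
`ρ(ζ) = ζ·e^{−ζ}` and `B` channels. -/
noncomputable def fdec (SA th lam V : ℝ) (B : ℕ) (zeta SM : ℝ) : ℝ :=
  (∑ r ∈ Finset.range (B + 1),
    (B.choose r : ℝ) * (zeta * Real.exp (-zeta)) ^ r *
      (1 - zeta * Real.exp (-zeta)) ^ (B - r) *
      nuhat V ((r : ℝ) * SA * SM / (SA + SM))) +
  lam * zeta * (B : ℝ) * (1 + th * SM)

/-- The threshold `v_th(λ,0)`. -/
noncomputable def vth0 (SA th lam : ℝ) : ℝ :=
  Real.sqrt (lam * th) + lam / 2 +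
    Real.sqrt lam * Real.sqrt (Real.sqrt (lam * th) + lam / 4 + 1 / SA)

open Finset Polynomial Real

lemma bernsteinPolynomial_eval (n ν : ℕ) (p : ℝ) :
    (bernsteinPolynomial ℝ n ν).eval p = n.choose ν * p ^ ν * (1 - p) ^ (n - ν) := by
  simp [bernsteinPolynomial]

lemma bernsteinPolynomial_eval_nonneg {n ν : ℕ} {p : ℝ} (hp₀ : 0 ≤ p) (hp₁ : p ≤ 1) :
    0 ≤ (bernsteinPolynomial ℝ n ν).eval p := by
  rw [bernsteinPolynomial_eval]
  have : 0 ≤ 1 - p := sub_nonneg.2 hp₁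
  positivity

lemma sum_bernsteinPolynomial_eval (n : ℕ) (p : ℝ) :
    ∑ ν ∈ range (n + 1), (bernsteinPolynomial ℝ n ν).eval p = 1 := by
  simpa [eval_finsetSum] using congrArg (eval p) (bernsteinPolynomial.sum ℝ n)

lemma sum_bernsteinPolynomial_eval_mul_natCast (n : ℕ) (p : ℝ) :
    ∑ ν ∈ range (n + 1), (bernsteinPolynomial ℝ n ν).eval p * ν = n * p := by
  simpa [eval_finsetSum, nsmul_eq_mul, mul_comm] using
    congrArg (eval p) (bernsteinPolynomial.sum_smul ℝ n)

lemma sub_nuhat_eq (V Λ : ℝ) (h : 1 + V * Λ ≠ 0) : V - nuhat V Λ = V ^ 2 * Λ / (1 + V * Λ) := by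
  rw [nuhat]; field_simp; ring

lemma sub_natCast_mul_sub_nuhat_le {V Λ : ℝ} (hV : 0 ≤ V) (hΛ : 0 ≤ Λ) (r : ℕ) :
    V - r * (V - nuhat V Λ) ≤ nuhat V (r * Λ) := by
  have hr : (0 : ℝ) ≤ r * (r - 1) := by
    rcases r with _ | r
    · simp
    · push_cast; nlinarith
  have hgap : nuhat V (r * Λ) - (V - r * (V - nuhat V Λ)) =
      V * (r * (r - 1)) * (V * Λ) ^ 2 / ((1 + V * Λ) * (1 + V * (r * Λ))) := by
    have : 0 < 1 + V * Λ := by positivity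
    have : 0 < 1 + V * (r * Λ) := by positivity
    unfold nuhat; field_simp; ring
  have : 0 ≤ nuhat V (r * Λ) - (V - r * (V - nuhat V Λ)) := by rw [hgap]; positivity
  linarith

lemma sub_nuhat_monotoneOn {Λ : ℝ} (hΛ : 0 ≤ Λ) :
    MonotoneOn (fun V => V - nuhat V Λ) (Set.Ici 0) := by
  intro V hV W hW hVW
  simp only [Set.mem_Ici] at hV hW
  dsimp only
  rw [sub_nuhat_eq _ _ (by positivity), sub_nuhat_eq _ _ (by positivity),
    div_le_div_iff₀ (by positivity) (by positivity)]
  nlinarith [mul_nonneg (mul_nonneg hΛ hΛ) (mul_nonneg (mul_nonneg hV hW) (sub_nonneg.2 hVW)),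
    mul_nonneg hΛ (mul_nonneg (add_nonneg hV hW) (sub_nonneg.2 hVW))]

lemma mul_exp_neg_le_one (x : ℝ) : x * exp (-x) ≤ 1 := by
  rw [exp_neg, ← div_eq_mul_inv, div_le_one (exp_pos x)]
  linarith [add_one_le_exp x]

lemma vth0_sub_sqrt_sq {SA th lam : ℝ} (hSA : 0 ≤ SA) (hlam : 0 ≤ lam) :
    (vth0 SA th lam - √(lam * th)) ^ 2 = lam * (vth0 SA th lam + 1 / SA) := by
  have hE : √(√(lam * th) + lam / 4 + 1 / SA) ^ 2 = √(lam * th) + lam / 4 + 1 / SA :=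
    sq_sqrt (by positivity)
  unfold vth0
  linear_combination (√(√(lam * th) + lam / 4 + 1 / SA) ^ 2) * sq_sqrt hlam + lam * hE

lemma sq_mul_le_of_sub_sq_eq {SA th lam t W : ℝ} (hSA : 0 < SA) (hlam : 0 < lam)
    (ht : t ^ 2 = lam * th) (hW : (W - t) ^ 2 = lam * (W + 1 / SA)) (S : ℝ) :
    W ^ 2 * (SA * S) ≤ lam * (1 + th * S) * (SA + S + W * (SA * S)) := by
  have hW' : (W - t) ^ 2 * SA = lam * (W * SA + 1) := by
    rw [hW]; field_simp
  have key : lam * (lam * (1 + th * S) * (SA + S + W * (SA * S)) - W ^ 2 * (SA * S)) =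
      SA * (t * (W - t) * S - lam) ^ 2 := by
    linear_combination (-(t ^ 2 * S ^ 2) - lam * S) * hW' -
      lam * (SA * S + S ^ 2 + W * SA * S ^ 2) * ht
  have : 0 ≤ lam * (lam * (1 + th * S) * (SA + S + W * (SA * S)) - W ^ 2 * (SA * S)) := by
    rw [key]; positivity
  nlinarith

lemma sub_nuhat_le_of_le_vth0 {SA th lam V S : ℝ} (hSA : 0 < SA) (hth : 0 ≤ th) (hlam : 0 < lam)
    (hS : 0 ≤ S) (hV : 0 ≤ V) (hVth : V ≤ vth0 SA th lam) :
    V - nuhat V (SA * S / (SA + S)) ≤ lam * (1 + th * S) := by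
  have hΛ : 0 ≤ SA * S / (SA + S) := by positivity
  have hW : 0 ≤ vth0 SA th lam := hV.trans hVth
  refine (sub_nuhat_monotoneOn hΛ hV hW hVth).trans ?_
  have hquad := sq_mul_le_of_sub_sq_eq (th := th) hSA hlam (sq_sqrt (by positivity))
    (vth0_sub_sqrt_sq hSA.le hlam.le) S
  dsimp only
  rw [sub_nuhat_eq _ _ (by positivity), div_le_iff₀ (by positivity)]
  have hden : 0 < SA + S := by positivity
  rw [← mul_le_mul_iff_of_pos_right hden]
  field_simp
  linarith

lemma sub_mul_sub_nuhat_le_sum_bernsteinPolynomial {V Λ p : ℝ} (hV : 0 ≤ V) (hΛ : 0 ≤ Λ)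
    (hp₀ : 0 ≤ p) (hp₁ : p ≤ 1) (n : ℕ) :
    V - n * p * (V - nuhat V Λ) ≤
      ∑ ν ∈ range (n + 1), (bernsteinPolynomial ℝ n ν).eval p * nuhat V (ν * Λ) :=
  calc V - n * p * (V - nuhat V Λ)
      = ∑ ν ∈ range (n + 1), (bernsteinPolynomial ℝ n ν).eval p * (V - ν * (V - nuhat V Λ)) := by
        simp only [mul_sub, sum_sub_distrib, ← mul_assoc, ← sum_mul, sum_bernsteinPolynomial_eval,
          sum_bernsteinPolynomial_eval_mul_natCast, one_mul]
    _ ≤ ∑ ν ∈ range (n + 1), (bernsteinPolynomial ℝ n ν).eval p * nuhat V (ν * Λ) :=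
        sum_le_sum fun ν _ => mul_le_mul_of_nonneg_left (sub_natCast_mul_sub_nuhat_le hV hΛ ν)
          (bernsteinPolynomial_eval_nonneg hp₀ hp₁)

lemma fdec_eq_sum_bernsteinPolynomial (SA th lam V : ℝ) (B : ℕ) (zeta SM : ℝ) :
    fdec SA th lam V B zeta SM =
      ∑ r ∈ range (B + 1), (bernsteinPolynomial ℝ B r).eval (zeta * exp (-zeta)) *
        nuhat V (r * (SA * SM / (SA + SM))) + lam * zeta * B * (1 + th * SM) := by
  simp only [fdec, bernsteinPolynomial_eval, mul_div_assoc, mul_assoc]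

lemma le_fdec {SA th lam V zeta SM : ℝ} (B : ℕ) (hSA : 0 ≤ SA) (hV : 0 ≤ V) (hzeta : 0 ≤ zeta)
    (hSM : 0 ≤ SM) (hgain : V - nuhat V (SA * SM / (SA + SM)) ≤ lam * (1 + th * SM)) :
    V ≤ fdec SA th lam V B zeta SM := by
  set Λ := SA * SM / (SA + SM)
  set ρ := zeta * exp (-zeta)
  have hΛ : 0 ≤ Λ := by positivity
  have hρ₀ : 0 ≤ ρ := by positivity
  have hρ : ρ ≤ zeta := mul_le_of_le_one_right hzeta (exp_le_one_iff.2 (neg_nonpos.2 hzeta))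
  have hgain₀ : 0 ≤ V - nuhat V Λ := by rw [sub_nuhat_eq _ _ (by positivity)]; positivity
  have hsum := sub_mul_sub_nuhat_le_sum_bernsteinPolynomial hV hΛ hρ₀ (mul_exp_neg_le_one zeta) B
  have hcost : B * ρ * (V - nuhat V Λ) ≤ lam * zeta * B * (1 + th * SM) :=
    calc B * ρ * (V - nuhat V Λ) ≤ B * zeta * (lam * (1 + th * SM)) := by gcongr
      _ = lam * zeta * B * (1 + th * SM) := by ring
  rw [fdec_eq_sum_bernsteinPolynomial]
  linarith

lemma fdec_zero_zero (SA th lam V : ℝ) (B : ℕ) : fdec SA th lam V B 0 0 = V := by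
  simp [fdec_eq_sum_bernsteinPolynomial, bernsteinPolynomial.eval_at_0, nuhat]

theorem stmt_17_general (SA th lam V : ℝ) (hSA : 0 < SA) (hth : 0 ≤ th)
    (hlam : 0 < lam)
    (B : ℕ) (hV : 0 < V) (hVth : V ≤ vth0 SA th lam) :
    (∀ zeta SM : ℝ, 0 ≤ zeta → 0 ≤ SM → fdec SA th lam V B zeta SM ≥ V) ∧
      fdec SA th lam V B 0 0 = V :=
  ⟨fun _ _ hzeta hSM => le_fdec B hSA.le hV.le hzeta hSM
    (sub_nuhat_le_of_le_vth0 hSA hth hlam hSM hV.le hVth), fdec_zero_zero SA th lam V B⟩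

/-- if `0 < V ≤ v_th(λ,0)`, then `f(ζ,S_M) ≥ V` on `[0,∞)²` and
`f(0,0) = V`, i.e. `(0,0)` globally minimizes `f`. -/
theorem stmt_17 (SA th lam V : ℝ) (hSA : 0 < SA) (hth : 0 ≤ th)
    (hlam : 0 < lam)
    (hlt : lam < 1 / (Real.sqrt (1 + 1 / SA) + Real.sqrt th) ^ 2)
    (B : ℕ) (hB : 1 ≤ B) (hV : 0 < V) (hVth : V ≤ vth0 SA th lam) :
    (∀ zeta SM : ℝ, 0 ≤ zeta → 0 ≤ SM → fdec SA th lam V B zeta SM ≥ V) ∧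
      fdec SA th lam V B 0 0 = V :=
  stmt_17_general SA th lam V hSA hth hlam B hV hVth
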